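/- Let G be a simple graph on vertex set [n] with n ≥ 2, and let ε be an edge between vertices j and n. Then the chromatic symmetric function in non-commuting variables satisfies Y_G = Y_{G∖ε} − Y_{G/ε}↑_j^n, where G∖ε is G with edge ε deleted and G/ε is G with vertices j and n identified (removing loops and multi-edges). -/
import Mathlib


open scoped Classical

/-- Formal power series in the non-commuting variables `x 0, x 1, x 2, …` over `ℚ`,
represented by their coefficient function on words. -/
abbrev NCS : Type := List ℕ → ℚ

/-- The chromatic symmetric function in non-commuting variables of a graph on `Fin n`:
the sum of `x_{κ(0)} x_{κ(1)} ⋯ x_{κ(n-1)}` over all proper colorings `κ`. -/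
noncomputable def Y {n : ℕ} (G : SimpleGraph (Fin n)) : NCS := fun w =>
  if h : w.length = n then
    (if ∀ u v : Fin n, G.Adj u v →
        w.get (Fin.cast h.symm u) ≠ w.get (Fin.cast h.symm v) then 1 else 0)
  else 0

/-- The induced series `f↑_j` (positions are 1-based): on a monomial
`x_{i_1} ⋯ x_{i_m}` with `j ≤ m` it produces `x_{i_1} ⋯ x_{i_m} x_{i_j}`,
appending a copy of the `j`-th variable at the end; extended linearly. -/
noncomputable def induce (f : NCS) (j : ℕ) : NCS := fun w =>
  if 1 ≤ j ∧ j + 1 ≤ w.length ∧ w.getLast? = (w.dropLast)[j - 1]? then f w.dropLast else 0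

/-- The contraction `G/ε` of the edge `ε` between vertex `j` and the last vertex:
the two endpoints are identified (at `j`), and loops and multiple edges are discarded. -/
def contractLast {n : ℕ} (G : SimpleGraph (Fin (n + 1))) (j : Fin n) : SimpleGraph (Fin n) :=
  SimpleGraph.fromRel (fun a b =>
    G.Adj a.castSucc b.castSucc ∨
    (a = j ∧ G.Adj (Fin.last n) b.castSucc) ∨
    (b = j ∧ G.Adj a.castSucc (Fin.last n)))

/-- Deletion–contraction for the chromatic symmetric function in non-commuting
variables: if `ε` is an edge between vertex `j` and the last vertex `n`, then
`Y_G = Y_{G∖ε} − Y_{G/ε}↑_j^n`. -/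
theorem deletion_contraction (n : ℕ) (G : SimpleGraph (Fin (n + 1))) (j : Fin n)
    (hε : G.Adj j.castSucc (Fin.last n)) :
    Y G = Y (G.deleteEdges {s(j.castSucc, Fin.last n)})
        - induce (Y (contractLast G j)) ((j : ℕ) + 1) := by
  have hjn : (j : ℕ) < n := j.isLt
  funext w
  simp only [Pi.sub_apply, Y, induce]
  by_cases hw : w.length = n + 1
  · have hd : w.dropLast.length = n := by simp [hw]
    set c : Fin (n + 1) → ℕ := fun u => w[(u : ℕ)]'(by omega) with hc
    have hget : ∀ u : Fin (n + 1), w.get (Fin.cast hw.symm u) = c u := fun u => by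
      simp [List.get_eq_getElem, Fin.coe_cast, hc]
    have hget' : ∀ a : Fin n, w.dropLast.get (Fin.cast hd.symm a) = c a.castSucc :=
      fun a => by
        simp only [List.get_eq_getElem, Fin.coe_cast, List.getElem_dropLast, hc,
          Fin.coe_castSucc]
    have hlast : ∀ a : Fin n, a.castSucc ≠ Fin.last n := fun a h => by
      have := congrArg Fin.val h; simp at this; omega
    have hcond : (1 ≤ (j : ℕ) + 1 ∧ (j : ℕ) + 1 + 1 ≤ w.length ∧
        w.getLast? = (w.dropLast)[(j : ℕ) + 1 - 1]?) ↔ c (Fin.last n) = c j.castSucc := by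
      have h1 : w.getLast? = some (c (Fin.last n)) := by
        rw [List.getLast?_eq_getElem?, List.getElem?_eq_getElem (by omega)]
        simp [hw, hc]
      have h2 : (w.dropLast)[(j : ℕ) + 1 - 1]? = some (c j.castSucc) := by
        rw [Nat.add_sub_cancel, List.getElem?_eq_getElem (by omega), List.getElem_dropLast]
        simp [hc]
      rw [h1, h2, Option.some_inj]
      exact ⟨fun h => h.2.2, fun h => ⟨by omega, by omega, h⟩⟩
    -- the three propriety conditions, in terms of c
    have key1 : (∀ u v : Fin (n + 1), G.Adj u v → c u ≠ c v) ↔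
        ((∀ u v : Fin (n + 1),
            (G.deleteEdges {s(j.castSucc, Fin.last n)}).Adj u v → c u ≠ c v) ∧
          ¬ c (Fin.last n) = c j.castSucc) := by
      constructor
      · intro h
        refine ⟨fun u v huv => h u v (SimpleGraph.deleteEdges_adj.mp huv).1, fun he => ?_⟩
        exact h _ _ hε he.symm
      · rintro ⟨hq, he⟩ u v huv
        by_cases hs : s(u, v) = s(j.castSucc, Fin.last n)
        · rw [Sym2.eq_iff] at hs
          rcases hs with ⟨rfl, rfl⟩ | ⟨rfl, rfl⟩
          · exact fun h => he h.symm
          · exact fun h => he h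
        · exact hq u v (SimpleGraph.deleteEdges_adj.mpr ⟨huv, by simpa using hs⟩)
    have key2 : c (Fin.last n) = c j.castSucc →
        ((∀ u v : Fin (n + 1),
            (G.deleteEdges {s(j.castSucc, Fin.last n)}).Adj u v → c u ≠ c v) ↔
          (∀ a b : Fin n, (contractLast G j).Adj a b → c a.castSucc ≠ c b.castSucc)) := by
      intro he
      constructor
      · intro hq a b hab
        simp only [contractLast, SimpleGraph.fromRel_adj] at hab
        obtain ⟨hne, hrel⟩ := hab
        have hq' : ∀ u v : Fin (n + 1), G.Adj u v → s(u, v) ≠ s(j.castSucc, Fin.last n) →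
            c u ≠ c v := fun u v h1 h2 =>
          hq u v (SimpleGraph.deleteEdges_adj.mpr ⟨h1, by simpa using h2⟩)
        have main : ∀ a b : Fin n, a ≠ b →
            (G.Adj a.castSucc b.castSucc ∨
             (a = j ∧ G.Adj (Fin.last n) b.castSucc) ∨
             (b = j ∧ G.Adj a.castSucc (Fin.last n))) → c a.castSucc ≠ c b.castSucc := by
          rintro a b hne (h | ⟨haj, h⟩ | ⟨hbj, h⟩)
          · refine hq' _ _ h ?_
            intro hs'
            rcases Sym2.eq_iff.mp hs' with ⟨h1, h2⟩ | ⟨h1, h2⟩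
            · exact hlast b h2
            · exact hlast a h1
          · have hne' : b ≠ j := fun hb => hne (haj.trans hb.symm)
            have h2 : c (Fin.last n) ≠ c b.castSucc := by
              refine hq' _ _ h ?_
              intro hs'
              rcases Sym2.eq_iff.mp hs' with ⟨h1, h2⟩ | ⟨h1, h2⟩
              · exact hlast b h2
              · exact hne' (Fin.castSucc_injective n h2)
            rw [haj]
            exact fun hcc => h2 (he.trans hcc)
          · have hne' : a ≠ j := fun ha => hne (ha.trans hbj.symm)
            have h2 : c a.castSucc ≠ c (Fin.last n) := by
              refine hq' _ _ h ?_
              intro hs'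
              rcases Sym2.eq_iff.mp hs' with ⟨h1, h2'⟩ | ⟨h1, h2'⟩
              · exact hne' (Fin.castSucc_injective n h1)
              · exact hlast a h1
            rw [hbj]
            exact fun hcc => h2 (hcc.trans he.symm)
        rcases hrel with h | h
        · exact main a b hne h
        · exact fun hcc => main b a hne.symm h hcc.symm
      · intro hr u v huv
        rw [SimpleGraph.deleteEdges_adj] at huv
        obtain ⟨huv, hs⟩ := huv
        have hs : s(u, v) ≠ s(j.castSucc, Fin.last n) := by simpa using hs
        rw [ne_eq, Sym2.eq_iff] at hs
        push_neg at hs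
        have hr' : ∀ a b : Fin n, a ≠ b →
            (G.Adj a.castSucc b.castSucc ∨
             (a = j ∧ G.Adj (Fin.last n) b.castSucc) ∨
             (b = j ∧ G.Adj a.castSucc (Fin.last n))) → c a.castSucc ≠ c b.castSucc := by
          intro a b h1 h2
          refine hr a b ?_
          simp only [contractLast, SimpleGraph.fromRel_adj]
          exact ⟨h1, Or.inl h2⟩
        rcases Fin.eq_castSucc_or_eq_last u with ⟨a, rfl⟩ | rfl
        · rcases Fin.eq_castSucc_or_eq_last v with ⟨b, rfl⟩ | rfl
          · refine hr' a b (fun h => ?_) (Or.inl huv)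
            exact G.irrefl (h ▸ huv)
          · have haj : a ≠ j := fun h' => hs.1 (by rw [h']) rfl
            have h2 := hr' a j haj (Or.inr (Or.inr ⟨rfl, huv⟩))
            exact fun hcc => h2 (hcc.trans he)
        · rcases Fin.eq_castSucc_or_eq_last v with ⟨b, rfl⟩ | rfl
          · have hbj : b ≠ j := fun h' => hs.2 rfl (by rw [h'])
            have h2 := hr' j b (fun h' => hbj h'.symm) (Or.inr (Or.inl ⟨rfl, huv⟩))
            exact fun hcc => h2 ((he.symm).trans hcc)
          · exact absurd huv (G.irrefl)
    -- assemble
    rw [dif_pos hw, dif_pos hw, dif_pos hd]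
    simp only [hget, hget']
    by_cases he : c (Fin.last n) = c j.castSucc
    · rw [if_pos (hcond.mpr he)]
      have hnp : ¬ (∀ u v : Fin (n + 1), G.Adj u v → c u ≠ c v) :=
        fun hp => (key1.mp hp).2 he
      rw [if_neg hnp]
      have hQR := key2 he
      by_cases hq : ∀ u v : Fin (n + 1),
          (G.deleteEdges {s(j.castSucc, Fin.last n)}).Adj u v → c u ≠ c v
      · rw [if_pos hq, if_pos (hQR.mp hq)]; ring
      · rw [if_neg hq, if_neg (fun hr => hq (hQR.mpr hr))]; ring
    · rw [if_neg (fun h => he (hcond.mp h))]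
      by_cases hq : ∀ u v : Fin (n + 1),
          (G.deleteEdges {s(j.castSucc, Fin.last n)}).Adj u v → c u ≠ c v
      · rw [if_pos hq, if_pos (key1.mpr ⟨hq, he⟩)]; ring
      · rw [if_neg hq, if_neg (fun hp => hq (key1.mp hp).1)]; ring
  · rw [dif_neg hw, dif_neg hw]
    by_cases hcond : 1 ≤ (j : ℕ) + 1 ∧ (j : ℕ) + 1 + 1 ≤ w.length ∧
        w.getLast? = (w.dropLast)[(j : ℕ) + 1 - 1]?
    · rw [if_pos hcond]
      have hlen : w.dropLast.length ≠ n := by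
        have : 1 ≤ w.length := le_trans (by omega) hcond.2.1
        simp only [List.length_dropLast]
        omega
      rw [dif_neg hlen]
      ring
    · rw [if_neg hcond]; ring
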